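/- arXiv:1902.01134 — 2 statements merged into one kernel-verified Lean document; each statement's English description precedes it below -/
import Mathlib

section
/- Let E be a compact subset of the real unit sphere S^{n-1} ⊂ ℝ^n ⊂ ℂ^n whose relative interior in S^{n-1} is nonempty. Then E has positive homogeneous capacity in the sense of Siciak; that is, Ψ_E^* is bounded above on the unit sphere {ζ ∈ ℂ^n : |ζ| = 1} of the hermitian norm. -/
open scoped ENNReal RealInnerProductSpace BigOperators
open Filter MeasureTheory

noncomputable section

/-- ℂⁿ with the hermitian (euclidean) norm. -/
abbrev Cn (n : ℕ) := EuclideanSpace ℂ (Fin n)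
/-- ℝⁿ with the euclidean norm. -/
abbrev Rn (n : ℕ) := EuclideanSpace ℝ (Fin n)

/-- The inclusion ℝⁿ ⊆ ℂⁿ. -/
def toCn {n : ℕ} (x : Rn n) : Cn n := WithLp.toLp 2 (fun i => (x i : ℂ))

/-- Evaluation of a polynomial on ℂⁿ at a point of ℂⁿ. -/
def evalP {n : ℕ} (p : MvPolynomial (Fin n) ℂ) (ζ : Cn n) : ℂ :=
  MvPolynomial.eval (fun i => ζ i) p

/-- Siciak's homogeneous extremal function with weight `γ`:
`Ψ_{E,γ}(ζ) = sup{ |p(ζ)|^{1/k} : p homogeneous of degree k ≥ 1, |p|^{1/k} ≤ γ on E }`. -/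
def siciak {n : ℕ} (E : Set (Cn n)) (γ : Cn n → ℝ) (ζ : Cn n) : ℝ≥0∞ :=
  ⨆ (p : MvPolynomial (Fin n) ℂ) (k : ℕ) (_ : p.IsHomogeneous k) (_ : 1 ≤ k)
    (_ : ∀ ξ ∈ E, ‖evalP p ξ‖ ^ (1 / (k : ℝ)) ≤ γ ξ),
    ENNReal.ofReal (‖evalP p ζ‖ ^ (1 / (k : ℝ)))

/-- The upper semicontinuous regularization `Ψ^*(ζ) = limsup_{ϑ → ζ} Ψ(ϑ)`. -/
def siciakStar {n : ℕ} (E : Set (Cn n)) (γ : Cn n → ℝ) (ζ : Cn n) : ℝ≥0∞ :=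
  Filter.limsup (siciak E γ) (nhds ζ)

/-- `E` has positive homogeneous capacity in the sense of Siciak:
`Ψ_E^*` is bounded above on the unit sphere of ℂⁿ. -/
def PosHomCapacity {n : ℕ} (E : Set (Cn n)) : Prop :=
  ∃ M : ℝ, ∀ ζ : Cn n, ‖ζ‖ = 1 → siciakStar E (fun _ => 1) ζ ≤ ENNReal.ofReal M

end

/-!
A homogeneous polynomial `p` of degree `k` with `|p| ≤ 1` on `E` is bounded by `2 ^ k` on the real
`ε/2`-neighbourhood of a point `ω` of the relative interior: project radially onto the cap.
Interpolating at `k + 1` equally spaced nodes on a short segment from `ω` towards a unit vector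
`u` (at the nodes `jδ/k` the Lagrange basis satisfies `∑ⱼ |ℓⱼ(z)| ≤ (2e(|z| + δ)/δ) ^ k`) gives
`|p u| ≤ (C/ε) ^ k`, hence `|p x| ≤ (C|x|/ε) ^ k` on `ℝⁿ` by homogeneity. Interpolating once
more, along `t ↦ Re ζ + t Im ζ` with `t ∈ [0, 1]`, and evaluating at `t = i` gives
`|p ζ| ≤ (C'|ζ|/ε) ^ k` on `ℂⁿ`. So `Ψ_E(ζ) ≤ C'|ζ|/ε`, a continuous bound that survives the
upper regularization.
-/

open Finset
open scoped Nat

theorem prod_erase_abs_natCast_sub (k j : ℕ) (hj : j ≤ k) :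
    ∏ i ∈ (range (k + 1)).erase j, |(j : ℝ) - i| = j ! * (k - j)! := by
  have hsplit : (range (k + 1)).erase j = range j ∪ Ico (j + 1) (k + 1) := by
    ext i; simp only [mem_erase, mem_range, mem_union, mem_Ico]; omega
  have hdisj : Disjoint (range j) (Ico (j + 1) (k + 1)) :=
    disjoint_left.2 fun i hi hi' => by simp only [mem_range, mem_Ico] at hi hi'; omega
  have hlow : ∏ i ∈ range j, |(j : ℝ) - i| = j ! := by
    rw [← prod_range_reflect, ← prod_range_add_one_eq_factorial]
    push_cast
    refine prod_congr rfl fun i hi => ?_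
    have := mem_range.1 hi
    rw [Nat.cast_sub (by omega), Nat.cast_sub (by omega), abs_of_nonneg (by push_cast; linarith)]
    push_cast; ring
  have hhigh : ∏ i ∈ Ico (j + 1) (k + 1), |(j : ℝ) - i| = (k - j)! := by
    rw [prod_Ico_eq_prod_range, ← prod_range_add_one_eq_factorial,
      show k + 1 - (j + 1) = k - j by omega]
    push_cast
    refine prod_congr rfl fun i _ => ?_
    rw [abs_sub_comm, abs_of_nonneg (by linarith)]
    ring
  rw [hsplit, prod_union hdisj, hlow, hhigh]

theorem sum_range_inv_factorial_mul_factorial (k : ℕ) :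
    ∑ j ∈ range (k + 1), ((j ! * (k - j)! : ℝ))⁻¹ = 2 ^ k / k ! := by
  have h : ∀ j ∈ range (k + 1), ((j ! * (k - j)! : ℝ))⁻¹ = (k.choose j : ℝ) / k ! := by
    intro j hj
    rw [Nat.cast_choose ℝ (Nat.lt_succ_iff.1 (mem_range.1 hj))]
    field_simp
  rw [sum_congr rfl h, ← sum_div]
  exact_mod_cast congrArg (fun m : ℕ => (m : ℝ) / k !) (Nat.sum_range_choose k)

namespace Polynomial

theorem norm_eval_lagrangeBasis_natCast_mul_le {k j : ℕ} (hj : j ≤ k) {c : ℂ} (hc : c ≠ 0)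
    (z : ℂ) :
    ‖(Lagrange.basis (range (k + 1)) (fun i : ℕ => (i : ℂ) * c) j).eval z‖ ≤
      (‖z‖ + k * ‖c‖) ^ k / (‖c‖ ^ k * (j ! * (k - j)!)) := by
  have hterm : ∀ i ∈ (range (k + 1)).erase j,
      ‖(Lagrange.basisDivisor ((j : ℂ) * c) (i * c)).eval z‖ =
        ‖z - i * c‖ / (‖c‖ * |(j : ℝ) - i|) := by
    intro i _
    rw [Lagrange.basisDivisor, eval_mul, eval_C, eval_sub, eval_X, eval_C, norm_mul, norm_inv,
      ← sub_mul, norm_mul, show (j : ℂ) - i = ((j - i : ℝ) : ℂ) by push_cast; ring,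
      Complex.norm_real, Real.norm_eq_abs, div_eq_inv_mul, mul_comm ‖c‖]
  have hcard : #((range (k + 1)).erase j) = k := by
    simp [card_erase_of_mem (mem_range.2 (Nat.lt_succ_of_le hj))]
  have hnum : ∏ i ∈ (range (k + 1)).erase j, ‖z - i * c‖ ≤ (‖z‖ + k * ‖c‖) ^ k := by
    refine (prod_le_prod (fun _ _ => norm_nonneg _) fun i hi => (norm_sub_le _ _).trans ?_).trans
      (by rw [prod_const, hcard])
    have hik : (i : ℝ) ≤ k := by
      exact_mod_cast Nat.lt_succ_iff.1 (mem_range.1 (mem_of_mem_erase hi))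
    rw [norm_mul, Complex.norm_natCast]
    gcongr
  rw [Lagrange.basis, eval_prod, norm_prod, prod_congr rfl hterm, prod_div_distrib,
    prod_mul_distrib, prod_const, hcard, prod_erase_abs_natCast_sub k j hj]
  gcongr

theorem norm_eval_le_of_norm_eval_natCast_mul_le {k : ℕ} {f : ℂ[X]} (hf : f.natDegree ≤ k)
    {c : ℂ} (hc : c ≠ 0) {B : ℝ} (hB : ∀ j ≤ k, ‖f.eval (j * c)‖ ≤ B) (z : ℂ) :
    ‖f.eval z‖ ≤ B * (2 * (‖z‖ + k * ‖c‖) / ‖c‖) ^ k / k ! := by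
  have hinj : Set.InjOn (fun i : ℕ => (i : ℂ) * c) (range (k + 1)) := fun a _ b _ h => by
    simpa [hc] using h
  have hdeg : f.degree < #(range (k + 1)) := by
    rw [card_range]
    exact degree_le_natDegree.trans_lt (by exact_mod_cast Nat.lt_succ_of_le hf)
  have hB0 : 0 ≤ B := (norm_nonneg _).trans (hB 0 k.zero_le)
  rw [Lagrange.eq_interpolate hinj hdeg, Lagrange.interpolate_apply, eval_finsetSum]
  calc _ ≤ ∑ j ∈ range (k + 1), B * ((‖z‖ + k * ‖c‖) ^ k / (‖c‖ ^ k * (j ! * (k - j)!))) := by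
        refine (norm_sum_le _ _).trans (sum_le_sum fun j hj => ?_)
        have hj := Nat.lt_succ_iff.1 (mem_range.1 hj)
        rw [eval_mul, eval_C, norm_mul]
        exact mul_le_mul (hB j hj) (norm_eval_lagrangeBasis_natCast_mul_le hj hc z)
          (norm_nonneg _) hB0
    _ = B * ((‖z‖ + k * ‖c‖) ^ k / ‖c‖ ^ k) *
          ∑ j ∈ range (k + 1), ((j ! * (k - j)! : ℝ))⁻¹ := by
        rw [mul_sum]
        refine sum_congr rfl fun j _ => ?_
        field_simp
    _ = _ := by
        rw [sum_range_inv_factorial_mul_factorial, div_pow, mul_pow]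
        ring

theorem norm_eval_le_of_norm_eval_natCast_mul_div_le {k : ℕ} (hk : 0 < k) {f : ℂ[X]}
    (hf : f.natDegree ≤ k) {δ : ℝ} (hδ : 0 < δ) {B : ℝ}
    (hB : ∀ j ≤ k, ‖f.eval ((j : ℂ) * (δ / k : ℝ))‖ ≤ B) (z : ℂ) :
    ‖f.eval z‖ ≤ B * (2 * Real.exp 1 * (‖z‖ + δ) / δ) ^ k := by
  have hk' : (0 : ℝ) < k := Nat.cast_pos.2 hk
  have hc : ((δ / k : ℝ) : ℂ) ≠ 0 := by exact_mod_cast (div_pos hδ hk').ne'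
  have hB0 : 0 ≤ B := (norm_nonneg _).trans (hB 0 k.zero_le)
  have hexp : (k : ℝ) ^ k / k ! ≤ Real.exp 1 ^ k := by
    simpa [← Real.exp_nat_mul] using Real.pow_div_factorial_le_exp (k : ℝ) hk'.le k
  refine (norm_eval_le_of_norm_eval_natCast_mul_le hf hc hB z).trans ?_
  rw [Complex.norm_real, Real.norm_of_nonneg (div_pos hδ hk').le]
  calc _ = B * ((2 * (‖z‖ + δ) / δ) ^ k * ((k : ℝ) ^ k / k !)) := by
        rw [show 2 * (‖z‖ + k * (δ / k)) / (δ / k) = 2 * (‖z‖ + δ) / δ * k by field_simp,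
          mul_pow]
        ring
    _ ≤ B * ((2 * (‖z‖ + δ) / δ) ^ k * Real.exp 1 ^ k) := by gcongr
    _ = _ := by rw [← mul_pow]; ring_nf

end Polynomial

namespace MvPolynomial

variable {R σ : Type*} [CommSemiring R] {p : MvPolynomial σ R} {k : ℕ}

theorem IsHomogeneous.eval_smul (hp : p.IsHomogeneous k) (c : R) (x : σ → R) :
    eval (c • x) p = c ^ k * eval x p := by
  rw [eval_eq, eval_eq, mul_sum]
  refine sum_congr rfl fun d hd => ?_
  have hdeg : ∑ i ∈ d.support, d i = k := by
    simpa [Finsupp.weight_apply, Finsupp.sum] using hp (mem_support_iff.1 hd)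
  simp_rw [Pi.smul_apply, smul_eq_mul, mul_pow, prod_mul_distrib, prod_pow_eq_pow_sum, hdeg]
  ring

noncomputable def lineRestriction (p : MvPolynomial σ R) (a b : σ → R) : Polynomial R :=
  aeval (fun i => Polynomial.C (b i) * Polynomial.X + Polynomial.C (a i)) p

theorem eval_lineRestriction (a b : σ → R) (t : R) :
    (p.lineRestriction a b).eval t = eval (a + t • b) p := by
  rw [lineRestriction, ← Polynomial.coe_aeval_eq_eval, ← AlgHom.comp_apply, comp_aeval,
    aeval_eq_eval]
  congr 2
  funext i
  simp only [map_add, map_mul, Polynomial.aeval_C, Polynomial.aeval_X, Pi.add_apply,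
    Pi.smul_apply, smul_eq_mul, Algebra.algebraMap_self, RingHom.id_apply]
  ring

theorem natDegree_lineRestriction_le (a b : σ → R) :
    (p.lineRestriction a b).natDegree ≤ p.totalDegree := by
  rw [lineRestriction, aeval_eq_eval₂Hom, coe_eval₂Hom, eval₂_eq]
  refine Polynomial.natDegree_sum_le_of_forall_le _ _ fun d hd => ?_
  refine (Polynomial.natDegree_C_mul_le _ _).trans <| (Polynomial.natDegree_prod_le _ _).trans <|
    (sum_le_sum fun i _ => ?_).trans (le_totalDegree hd)
  simpa using Polynomial.natDegree_pow_le_of_le (d i) Polynomial.natDegree_linear_le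

end MvPolynomial

open MvPolynomial

theorem Real.rpow_one_div_natCast_le_iff {x y : ℝ} {k : ℕ} (hx : 0 ≤ x) (hy : 0 ≤ y) (hk : 0 < k) :
    x ^ (1 / (k : ℝ)) ≤ y ↔ x ≤ y ^ k := by
  rw [one_div, Real.rpow_inv_le_iff_of_pos hx hy (by positivity), Real.rpow_natCast]

theorem EuclideanSpace.norm_le_of_forall_norm_le {𝕜 𝕜' ι : Type*} [RCLike 𝕜] [RCLike 𝕜']
    [Fintype ι] {x : EuclideanSpace 𝕜 ι} {y : EuclideanSpace 𝕜' ι} (h : ∀ i, ‖x i‖ ≤ ‖y i‖) :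
    ‖x‖ ≤ ‖y‖ := by
  rw [EuclideanSpace.norm_eq, EuclideanSpace.norm_eq]
  gcongr with i
  exact h i

section Evaluation

variable {n k : ℕ} {p : MvPolynomial (Fin n) ℂ}

theorem toCn_add (x y : Rn n) : toCn (x + y) = toCn x + toCn y := by
  ext i; simp [toCn]

theorem toCn_smul (r : ℝ) (x : Rn n) : toCn (r • x) = (r : ℂ) • toCn x := by
  ext i; simp [toCn]

theorem evalP_add_smul (a b : Cn n) (t : ℂ) :
    evalP p (a + t • b) = (p.lineRestriction a b).eval t := by
  rw [eval_lineRestriction]; rfl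

theorem evalP_smul (hp : p.IsHomogeneous k) (c : ℂ) (ζ : Cn n) :
    evalP p (c • ζ) = c ^ k * evalP p ζ :=
  hp.eval_smul c _

theorem norm_evalP_toCn_smul (hp : p.IsHomogeneous k) (r : ℝ) (x : Rn n) :
    ‖evalP p (toCn (r • x))‖ = |r| ^ k * ‖evalP p (toCn x)‖ := by
  rw [toCn_smul, evalP_smul hp, norm_mul, norm_pow, Complex.norm_real, Real.norm_eq_abs]

theorem norm_evalP_toCn_le_of_forall_norm_eq_one (hp : p.IsHomogeneous k) (hk : 0 < k) {A : ℝ}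
    (hA : ∀ u : Rn n, ‖u‖ = 1 → ‖evalP p (toCn u)‖ ≤ A ^ k) (x : Rn n) :
    ‖evalP p (toCn x)‖ ≤ (A * ‖x‖) ^ k := by
  rcases eq_or_ne x 0 with rfl | hx
  · simpa [hk.ne'] using norm_evalP_toCn_smul hp 0 0
  have hxu : x = ‖x‖ • (‖x‖⁻¹ • x) := (smul_inv_smul₀ (norm_ne_zero_iff.2 hx) x).symm
  rw [hxu, norm_evalP_toCn_smul hp, abs_norm, mul_pow, mul_comm (A ^ k), ← hxu]
  gcongr
  exact hA _ (norm_smul_inv_norm hx)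

end Evaluation

section Cap

variable {n k : ℕ} {E : Set (Rn n)} {ω : Rn n} {ε : ℝ} {p : MvPolynomial (Fin n) ℂ}

theorem norm_evalP_toCn_le_of_norm_sub_lt (hp : p.IsHomogeneous k) (hω : ‖ω‖ = 1) (hε1 : ε ≤ 1)
    (hcap : ∀ ω' : Rn n, ‖ω'‖ = 1 → ‖ω' - ω‖ < ε → ω' ∈ E)
    (hpE : ∀ x ∈ E, ‖evalP p (toCn x)‖ ≤ 1) {y : Rn n} (hy : ‖y - ω‖ < ε / 2) :
    ‖evalP p (toCn y)‖ ≤ 2 ^ k := by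
  have hnorm : |1 - ‖y‖| ≤ ‖y - ω‖ := by
    simpa [hω, norm_sub_rev y] using abs_norm_sub_norm_le ω y
  have hy0 : y ≠ 0 := norm_ne_zero_iff.1 (by linarith [abs_le.1 hnorm])
  set u : Rn n := ‖y‖⁻¹ • y
  have hu : ‖u‖ = 1 := norm_smul_inv_norm hy0
  have hyu : y = ‖y‖ • u := (smul_inv_smul₀ (norm_ne_zero_iff.2 hy0) y).symm
  have huω : ‖u - ω‖ < ε :=
    calc ‖u - ω‖ ≤ ‖u - y‖ + ‖y - ω‖ := norm_sub_le_norm_sub_add_norm_sub u y ω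
      _ = |1 - ‖y‖| + ‖y - ω‖ := by
        rw [show u - y = (1 - ‖y‖) • u by rw [sub_smul, one_smul, ← hyu], norm_smul, hu, mul_one,
          Real.norm_eq_abs]
      _ < ε := by linarith
  rw [hyu, norm_evalP_toCn_smul hp, abs_norm]
  calc ‖y‖ ^ k * ‖evalP p (toCn u)‖ ≤ 2 ^ k * 1 := by
        gcongr
        · linarith [abs_le.1 hnorm]
        · exact hpE u (hcap u hu huω)
    _ = 2 ^ k := mul_one _

theorem norm_evalP_toCn_le_of_cap (hk : 0 < k) (hp : p.IsHomogeneous k) (hω : ‖ω‖ = 1)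
    (hε : 0 < ε) (hε1 : ε ≤ 1) (hcap : ∀ ω' : Rn n, ‖ω'‖ = 1 → ‖ω' - ω‖ < ε → ω' ∈ E)
    (hpE : ∀ x ∈ E, ‖evalP p (toCn x)‖ ≤ 1) (x : Rn n) :
    ‖evalP p (toCn x)‖ ≤ (64 * Real.exp 1 / ε * ‖x‖) ^ k := by
  refine norm_evalP_toCn_le_of_forall_norm_eq_one hp hk (fun u hu => ?_) x
  set f := p.lineRestriction (toCn ω) (toCn (u - ω))
  have hf : ∀ t : ℝ, f.eval (t : ℂ) = evalP p (toCn (ω + t • (u - ω))) := fun t => by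
    rw [toCn_add, toCn_smul, evalP_add_smul]
  have hδ : 0 < ε / 8 := by positivity
  have hnodes : ∀ j ≤ k, ‖f.eval ((j : ℂ) * (ε / 8 / k : ℝ))‖ ≤ 2 ^ k := by
    intro j hj
    have ht : j * (ε / 8 / k) ≤ ε / 8 := by
      rw [mul_div_left_comm]
      exact mul_le_of_le_one_right hδ.le (div_le_one_of_le₀ (by exact_mod_cast hj) k.cast_nonneg)
    rw [← Complex.ofReal_natCast, ← Complex.ofReal_mul, hf]
    refine norm_evalP_toCn_le_of_norm_sub_lt hp hω hε1 hcap hpE ?_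
    calc ‖ω + (j * (ε / 8 / k)) • (u - ω) - ω‖ = j * (ε / 8 / k) * ‖u - ω‖ := by
          rw [add_sub_cancel_left, norm_smul, Real.norm_of_nonneg (by positivity)]
      _ ≤ ε / 8 * 2 := by
          gcongr
          exact (norm_sub_le u ω).trans (by rw [hu, hω]; norm_num)
      _ < ε / 2 := by linarith
  have h1 : f.eval 1 = evalP p (toCn u) := by
    simpa using hf 1
  calc ‖evalP p (toCn u)‖ ≤ 2 ^ k * (2 * Real.exp 1 * (‖(1 : ℂ)‖ + ε / 8) / (ε / 8)) ^ k := by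
        rw [← h1]
        exact Polynomial.norm_eval_le_of_norm_eval_natCast_mul_div_le hk
          ((natDegree_lineRestriction_le _ _).trans hp.totalDegree_le) hδ hnodes 1
    _ = (32 * Real.exp 1 * (1 + ε / 8) / ε) ^ k := by
        rw [norm_one, ← mul_pow]
        congr 1
        field_simp
        ring
    _ ≤ (64 * Real.exp 1 / ε) ^ k := by
        gcongr (?_ / _) ^ _
        nlinarith [Real.exp_pos 1]

end Cap

theorem norm_evalP_le_of_forall_norm_evalP_toCn_le {n k : ℕ} {p : MvPolynomial (Fin n) ℂ}
    (hk : 0 < k) (hp : p.IsHomogeneous k) {A : ℝ} (hA0 : 0 ≤ A)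
    (hA : ∀ x : Rn n, ‖evalP p (toCn x)‖ ≤ (A * ‖x‖) ^ k) (ζ : Cn n) :
    ‖evalP p ζ‖ ≤ (8 * Real.exp 1 * A * ‖ζ‖) ^ k := by
  set ξ : Rn n := WithLp.toLp 2 fun i => (ζ i).re
  set η : Rn n := WithLp.toLp 2 fun i => (ζ i).im
  have hξ : ‖ξ‖ ≤ ‖ζ‖ := EuclideanSpace.norm_le_of_forall_norm_le fun i => Complex.abs_re_le_norm _
  have hη : ‖η‖ ≤ ‖ζ‖ := EuclideanSpace.norm_le_of_forall_norm_le fun i => Complex.abs_im_le_norm _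
  have hζ : ζ = toCn ξ + Complex.I • toCn η := by
    ext i; simp [ξ, η, toCn, mul_comm Complex.I]
  set f := p.lineRestriction (toCn ξ) (toCn η)
  have hnodes : ∀ j ≤ k, ‖f.eval ((j : ℂ) * (1 / k : ℝ))‖ ≤ (A * (2 * ‖ζ‖)) ^ k := by
    intro j hj
    have ht : j * (1 / k : ℝ) ≤ 1 := by
      rw [mul_one_div]; exact div_le_one_of_le₀ (by exact_mod_cast hj) k.cast_nonneg
    rw [← Complex.ofReal_natCast, ← Complex.ofReal_mul, ← evalP_add_smul, ← toCn_smul,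
      ← toCn_add]
    refine (hA _).trans ?_
    gcongr
    calc ‖ξ + (j * (1 / k : ℝ)) • η‖ ≤ ‖ξ‖ + j * (1 / k : ℝ) * ‖η‖ := by
          refine (norm_add_le _ _).trans ?_
          rw [norm_smul, Real.norm_of_nonneg (by positivity)]
      _ ≤ ‖ζ‖ + 1 * ‖ζ‖ := by gcongr
      _ = 2 * ‖ζ‖ := by ring
  calc ‖evalP p ζ‖ = ‖f.eval Complex.I‖ := by rw [← evalP_add_smul, ← hζ]
    _ ≤ (A * (2 * ‖ζ‖)) ^ k * (2 * Real.exp 1 * (‖Complex.I‖ + 1) / 1) ^ k :=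
        Polynomial.norm_eval_le_of_norm_eval_natCast_mul_div_le hk
          ((natDegree_lineRestriction_le _ _).trans hp.totalDegree_le) one_pos hnodes _
    _ = (8 * Real.exp 1 * A * ‖ζ‖) ^ k := by
        rw [Complex.norm_I, ← mul_pow]
        ring_nf

section Siciak

variable {n : ℕ} {E : Set (Cn n)} {γ : Cn n → ℝ}

theorem siciak_le_ofReal {ζ : Cn n} {R : ℝ} (hR : 0 ≤ R)
    (h : ∀ (p : MvPolynomial (Fin n) ℂ) (k : ℕ), p.IsHomogeneous k → 0 < k →
      (∀ ξ ∈ E, ‖evalP p ξ‖ ^ (1 / (k : ℝ)) ≤ γ ξ) → ‖evalP p ζ‖ ≤ R ^ k) :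
    siciak E γ ζ ≤ ENNReal.ofReal R :=
  iSup_le fun p => iSup_le fun k => iSup_le fun hp => iSup_le fun hk => iSup_le fun hE =>
    ENNReal.ofReal_le_ofReal <|
      (Real.rpow_one_div_natCast_le_iff (norm_nonneg _) hR hk).2 (h p k hp hk hE)

theorem siciakStar_le_ofReal_mul_norm {C : ℝ}
    (h : ∀ ϑ, siciak E γ ϑ ≤ ENNReal.ofReal (C * ‖ϑ‖)) (ζ : Cn n) :
    siciakStar E γ ζ ≤ ENNReal.ofReal (C * ‖ζ‖) :=
  (limsup_le_limsup (.of_forall h)).trans_eq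
    ((ENNReal.continuous_ofReal.comp (by fun_prop)).tendsto ζ).limsup_eq

end Siciak

theorem korevaar_positive_capacity_general {n : ℕ} (E : Set (Rn n))
    (hEsph : E ⊆ {ω : Rn n | ‖ω‖ = 1})
    (hint : ∃ ω ∈ E, ∃ ε : ℝ, 0 < ε ∧ ∀ ω' : Rn n, ‖ω'‖ = 1 → ‖ω' - ω‖ < ε → ω' ∈ E) :
    PosHomCapacity (toCn '' E) := by
  obtain ⟨ω, hωE, ε, hε, hcap⟩ := hint
  have hcap' : ∀ ω' : Rn n, ‖ω'‖ = 1 → ‖ω' - ω‖ < min ε 1 → ω' ∈ E :=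
    fun ω' h1 h2 => hcap ω' h1 (h2.trans_le (min_le_left _ _))
  set A := 64 * Real.exp 1 / min ε 1
  have hA : 0 ≤ A := by positivity
  refine ⟨8 * Real.exp 1 * A, fun ζ hζ => ?_⟩
  have hbound (ϑ : Cn n) :
      siciak (toCn '' E) (fun _ => 1) ϑ ≤ ENNReal.ofReal (8 * Real.exp 1 * A * ‖ϑ‖) := by
    refine siciak_le_ofReal (by positivity) fun p k hp hk hpE => ?_
    have hpE' : ∀ x ∈ E, ‖evalP p (toCn x)‖ ≤ 1 := fun x hx => by
      simpa using (Real.rpow_one_div_natCast_le_iff (norm_nonneg _) zero_le_one hk).1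
        (hpE _ (Set.mem_image_of_mem toCn hx))
    have hreal := norm_evalP_toCn_le_of_cap hk hp (hEsph hωE) (lt_min hε one_pos)
      (min_le_right _ _) hcap' hpE'
    exact norm_evalP_le_of_forall_norm_evalP_toCn_le hk hp hA hreal ϑ
  simpa [hζ] using siciakStar_le_ofReal_mul_norm hbound ζ

/-- Theorem 2.2 (Korevaar): a compact subset of the real unit sphere with nonempty relative
interior has positive homogeneous capacity in the sense of Siciak. -/
theorem korevaar_positive_capacity {n : ℕ} (E : Set (Rn n))
    (hEcpt : IsCompact E) (hEsph : E ⊆ {ω : Rn n | ‖ω‖ = 1})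
    (hint : ∃ ω ∈ E, ∃ ε : ℝ, 0 < ε ∧ ∀ ω' : Rn n, ‖ω'‖ = 1 → ‖ω' - ω‖ < ε → ω' ∈ E) :
    PosHomCapacity (toCn '' E) :=
  korevaar_positive_capacity_general E hEsph hint
end

section
/- Let |·|_c denote the cross norm on ℂ^n associated to the euclidean norm on ℝ^n. Then |ζ| ≤ |ζ|_c ≤ √2·|ζ| for every ζ ∈ ℂ^n; moreover |ζ| = |ζ|_c if and only if ζ ∈ ℂℝ^n = { zξ : z ∈ ℂ, ξ ∈ ℝ^n }, and |ζ|_c = √2·|ζ| if and only if ⟨ζ,ζ⟩ = ζ_1² + ⋯ + ζ_n² = 0. -/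
open scoped ENNReal RealInnerProductSpace BigOperators
open Filter MeasureTheory

noncomputable section

/-- The cross norm on ℂⁿ associated to a norm `ν` on ℝⁿ. -/
def crossNorm {n : ℕ} (ν : Rn n → ℝ) (ζ : Cn n) : ℝ :=
  sInf { s : ℝ | ∃ (N : ℕ) (α : Fin N → ℂ) (ω : Fin N → Rn n),
    ζ = ∑ j, α j • toCn (ω j) ∧ s = ∑ j, ‖α j‖ * ν (ω j) }

/-- The complex bilinear form `⟨z,ζ⟩ = Σ_j z_j ζ_j` on ℂⁿ. -/
def bform {n : ℕ} (z w : Cn n) : ℂ := ∑ j, z j * w j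

/-! Rotating `ζ` by a unimodular `u` with `u² ⟨ζ,ζ⟩ ≥ 0` gives `uζ = ξ + iη` with `ξ ⊥ η` and
`|ξ|² - |η|² = |⟨ζ,ζ⟩|`. Then `|ζ|_c = |ξ| + |η|`: the decomposition itself gives `≤`, and the
`ℂ`-linear functional `w ↦ ⟨ξ/|ξ| + i η/|η|, w⟩`, which by Bessel's inequality has modulus at
most `|ω|` on real vectors `ω`, gives `≥`. As `|ζ|² = |ξ|² + |η|²`, the comparison and both
equality cases reduce to comparing `|ξ| + |η|` with `√(|ξ|² + |η|²)`. -/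

open scoped InnerProductSpace
open Complex (I)

lemma inner_sq_add_inner_sq_le {E : Type*} [NormedAddCommGroup E] [InnerProductSpace ℝ E]
    {a b : E} (ha : ‖a‖ ≤ 1) (hb : ‖b‖ ≤ 1) (hab : ⟪a, b⟫_ℝ = 0) (x : E) :
    ⟪a, x⟫_ℝ ^ 2 + ⟪b, x⟫_ℝ ^ 2 ≤ ‖x‖ ^ 2 := by
  have h := real_inner_self_nonneg (x := x - ⟪a, x⟫_ℝ • a - ⟪b, x⟫_ℝ • b)
  simp only [inner_sub_left, inner_sub_right, real_inner_smul_left, real_inner_smul_right,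
    real_inner_self_eq_norm_sq, real_inner_comm a x, real_inner_comm b x, real_inner_comm a b,
    hab, norm_smul, mul_pow, Real.norm_eq_abs, sq_abs] at h
  nlinarith [pow_le_one₀ (norm_nonneg a) ha (n := 2), pow_le_one₀ (norm_nonneg b) hb (n := 2),
    sq_nonneg ⟪a, x⟫_ℝ, sq_nonneg ⟪b, x⟫_ℝ]

lemma exists_norm_eq_one_sq_mul_eq_norm (z : ℂ) : ∃ u : ℂ, ‖u‖ = 1 ∧ u ^ 2 * z = ‖z‖ := by
  refine ⟨Complex.exp (↑(-(z.arg / 2)) * I), Complex.norm_exp_ofReal_mul_I _, ?_⟩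
  calc Complex.exp (↑(-(z.arg / 2)) * I) ^ 2 * z
      = Complex.exp (↑(-(z.arg / 2)) * I) ^ 2 * (‖z‖ * Complex.exp (z.arg * I)) := by
        rw [Complex.norm_mul_exp_arg_mul_I]
    _ = ‖z‖ * Complex.exp (↑(-(z.arg / 2)) * I * 2 + z.arg * I) := by
        rw [Complex.exp_add, ← Complex.exp_nat_mul]
        ring_nf
    _ = ‖z‖ := by push_cast; ring_nf; rw [Complex.exp_zero, mul_one]

section SqrtTwo

variable {a b c : ℝ}

lemma add_le_sqrt_two_mul (ha : 0 ≤ a) (hb : 0 ≤ b) (hc : 0 ≤ c) (h : c ^ 2 = a ^ 2 + b ^ 2) :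
    a + b ≤ √2 * c := by
  rw [← pow_le_pow_iff_left₀ (by positivity) (by positivity) two_ne_zero, mul_pow,
    Real.sq_sqrt zero_le_two]
  nlinarith [sq_nonneg (a - b)]

lemma add_eq_sqrt_two_mul_iff (ha : 0 ≤ a) (hb : 0 ≤ b) (hc : 0 ≤ c)
    (h : c ^ 2 = a ^ 2 + b ^ 2) : a + b = √2 * c ↔ a = b := by
  rw [← sq_eq_sq₀ (by positivity) (by positivity), mul_pow, Real.sq_sqrt zero_le_two, h]
  constructor
  · intro h'
    nlinarith [sq_nonneg (a - b)]
  · rintro rfl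
    ring

lemma eq_add_iff_mul_eq_zero (ha : 0 ≤ a) (hb : 0 ≤ b) (hc : 0 ≤ c)
    (h : c ^ 2 = a ^ 2 + b ^ 2) : c = a + b ↔ a * b = 0 := by
  rw [← sq_eq_sq₀ hc (by positivity), h]
  constructor <;> intro h' <;> linarith

end SqrtTwo

section CrossNorm

variable {n : ℕ}

@[simp]
lemma toCn_apply (x : Rn n) (j : Fin n) : toCn x j = (x j : ℂ) := rfl

@[simp]
lemma toCn_zero : toCn (0 : Rn n) = 0 := by
  ext; simp

lemma inner_toCn_toCn (x y : Rn n) : ⟪toCn x, toCn y⟫_ℂ = (⟪x, y⟫_ℝ : ℂ) := by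
  simp [PiLp.inner_apply, mul_comm]

lemma norm_toCn (x : Rn n) : ‖toCn x‖ = ‖x‖ := by
  simp [EuclideanSpace.norm_eq]

lemma exists_eq_toCn_add_I_smul (ζ : Cn n) :
    ∃ ξ η : Rn n, ζ = toCn ξ + I • toCn η :=
  ⟨WithLp.toLp 2 fun j => (ζ j).re, WithLp.toLp 2 fun j => (ζ j).im, by
    ext j; simp [mul_comm I, Complex.re_add_im]⟩

lemma norm_toCn_add_I_smul_sq (ξ η : Rn n) :
    ‖toCn ξ + I • toCn η‖ ^ 2 = ‖ξ‖ ^ 2 + ‖η‖ ^ 2 := by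
  simp only [EuclideanSpace.norm_sq_eq, ← Finset.sum_add_distrib]
  refine Finset.sum_congr rfl fun j _ => ?_
  simp [mul_comm I, Complex.sq_norm, Complex.normSq_add_mul_I]

lemma inner_toCn_add_I_smul (a b ξ η : Rn n) :
    ⟪toCn a + I • toCn b, toCn ξ + I • toCn η⟫_ℂ
      = ((⟪a, ξ⟫_ℝ + ⟪b, η⟫_ℝ : ℝ) : ℂ) + ((⟪a, η⟫_ℝ - ⟪b, ξ⟫_ℝ : ℝ) : ℂ) * I := by
  simp only [inner_add_left, inner_add_right, inner_smul_left, inner_smul_right,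
    inner_toCn_toCn, Complex.conj_I]
  push_cast
  linear_combination -(⟪b, η⟫_ℝ : ℂ) * Complex.I_sq

lemma bform_smul_self (c : ℂ) (ζ : Cn n) : bform (c • ζ) (c • ζ) = c ^ 2 * bform ζ ζ := by
  simp only [bform, Finset.mul_sum, PiLp.smul_apply, smul_eq_mul]
  exact Finset.sum_congr rfl fun j _ => by ring

lemma bform_toCn_add_I_smul (ξ η : Rn n) :
    bform (toCn ξ + I • toCn η) (toCn ξ + I • toCn η)
      = ((‖ξ‖ ^ 2 - ‖η‖ ^ 2 : ℝ) : ℂ) + ((2 * ⟪ξ, η⟫_ℝ : ℝ) : ℂ) * I := by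
  simp only [bform, ← real_inner_self_eq_norm_sq, PiLp.inner_apply]
  push_cast
  simp only [Finset.mul_sum, ← Finset.sum_sub_distrib, Finset.sum_mul, ← Finset.sum_add_distrib]
  refine Finset.sum_congr rfl fun j _ => ?_
  simp only [PiLp.add_apply, toCn_apply, PiLp.smul_apply, smul_eq_mul, inner_self_eq_norm_sq_to_K,
    Real.norm_eq_abs, Real.ringHom_apply, sq_abs, Complex.ofReal_pow, RCLike.inner_apply,
    Complex.ofReal_mul]
  linear_combination (η j : ℂ) ^ 2 * Complex.I_sq

lemma crossNorm_set_nonempty (ν : Rn n → ℝ) (ζ : Cn n) :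
    { s : ℝ | ∃ (N : ℕ) (α : Fin N → ℂ) (ω : Fin N → Rn n),
      ζ = ∑ j, α j • toCn (ω j) ∧ s = ∑ j, ‖α j‖ * ν (ω j) }.Nonempty := by
  obtain ⟨ξ, η, rfl⟩ := exists_eq_toCn_add_I_smul ζ
  exact ⟨_, 2, ![1, I], ![ξ, η], by simp [Fin.sum_univ_two], rfl⟩

lemma Seminorm.le_crossNorm {ν : Rn n → ℝ} (p : Seminorm ℂ (Cn n))
    (hp : ∀ ω, p (toCn ω) ≤ ν ω) (ζ : Cn n) : p ζ ≤ crossNorm ν ζ := by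
  refine le_csInf (crossNorm_set_nonempty ν ζ) ?_
  rintro _ ⟨N, α, ω, rfl, rfl⟩
  calc p (∑ j, α j • toCn (ω j))
      ≤ ∑ j, p (α j • toCn (ω j)) :=
        Finset.le_sum_of_subadditive p (map_zero p).le (map_add_le_add p) _ _
    _ = ∑ j, ‖α j‖ * p (toCn (ω j)) := by simp only [map_smul_eq_mul]
    _ ≤ ∑ j, ‖α j‖ * ν (ω j) := by gcongr with j; exact hp _

lemma crossNorm_sum_le {ν : Rn n → ℝ} (hν : ∀ ω, 0 ≤ ν ω) {N : ℕ} (α : Fin N → ℂ)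
    (ω : Fin N → Rn n) : crossNorm ν (∑ j, α j • toCn (ω j)) ≤ ∑ j, ‖α j‖ * ν (ω j) := by
  refine csInf_le ⟨0, ?_⟩ ⟨N, α, ω, rfl, rfl⟩
  rintro _ ⟨M, β, υ, -, rfl⟩
  exact Finset.sum_nonneg fun j _ => mul_nonneg (norm_nonneg _) (hν _)

lemma crossNorm_smul_toCn_le {ν : Rn n → ℝ} (hν : ∀ ω, 0 ≤ ν ω) (z : ℂ) (x : Rn n) :
    crossNorm ν (z • toCn x) ≤ ‖z‖ * ν x := by
  simpa using crossNorm_sum_le hν ![z] ![x]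

lemma crossNorm_add_le {ν : Rn n → ℝ} (hν : ∀ ω, 0 ≤ ν ω) (α β : ℂ) (x y : Rn n) :
    crossNorm ν (α • toCn x + β • toCn y) ≤ ‖α‖ * ν x + ‖β‖ * ν y := by
  simpa [Fin.sum_univ_two] using crossNorm_sum_le hν ![α, β] ![x, y]

lemma norm_le_crossNorm (ζ : Cn n) : ‖ζ‖ ≤ crossNorm (fun x => ‖x‖) ζ :=
  (normSeminorm ℂ (Cn n)).le_crossNorm (fun ω => (norm_toCn ω).le) ζ

lemma norm_inner_le_crossNorm {a b : Rn n} (ha : ‖a‖ ≤ 1) (hb : ‖b‖ ≤ 1) (hab : ⟪a, b⟫_ℝ = 0)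
    (ζ : Cn n) : ‖⟪toCn a + I • toCn b, ζ⟫_ℂ‖ ≤ crossNorm (fun x => ‖x‖) ζ := by
  refine ((normSeminorm ℂ ℂ).comp (innerₛₗ ℂ (toCn a + I • toCn b))).le_crossNorm
    (fun ω => ?_) ζ
  have h := inner_toCn_add_I_smul a b ω 0
  simp only [toCn_zero, smul_zero, add_zero, inner_zero_right, zero_sub] at h
  rw [Seminorm.comp_apply, coe_normSeminorm, innerₛₗ_apply_apply, h, Complex.norm_add_mul_I,
    Real.sqrt_le_left (norm_nonneg _), neg_sq]
  exact inner_sq_add_inner_sq_le ha hb hab ω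

lemma crossNorm_smul_toCn_add_I_smul (u : ℂ) {ξ η : Rn n} (h : ⟪ξ, η⟫_ℝ = 0) :
    crossNorm (fun x => ‖x‖) (u • (toCn ξ + I • toCn η)) = ‖u‖ * (‖ξ‖ + ‖η‖) := by
  refine le_antisymm ?_ ?_
  · rw [smul_add, smul_smul]
    refine (crossNorm_add_le (fun _ => norm_nonneg _) u (u * I) ξ η).trans_eq ?_
    simp only [norm_mul, Complex.norm_I]
    ring
  · -- `0⁻¹ = 0` keeps these normalisations valid when `ξ` or `η` vanishes
    have hunit : ∀ x : Rn n, ‖‖x‖⁻¹ • x‖ ≤ 1 := fun x =>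
      mem_closedBall_zero_iff.mp (inv_norm_smul_mem_unitClosedBall x)
    have hself : ∀ x : Rn n, ⟪‖x‖⁻¹ • x, x⟫_ℝ = ‖x‖ := fun x => by
      rw [real_inner_smul_left, real_inner_self_eq_norm_mul_norm, ← mul_assoc, inv_mul_mul_self]
    have hval : ⟪toCn (‖ξ‖⁻¹ • ξ) + I • toCn (‖η‖⁻¹ • η), toCn ξ + I • toCn η⟫_ℂ
        = ((‖ξ‖ + ‖η‖ : ℝ) : ℂ) := by
      rw [inner_toCn_add_I_smul, hself, hself, real_inner_smul_left, real_inner_smul_left, h,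
        real_inner_comm ξ η, h]
      simp
    calc ‖u‖ * (‖ξ‖ + ‖η‖)
        = ‖⟪toCn (‖ξ‖⁻¹ • ξ) + I • toCn (‖η‖⁻¹ • η), u • (toCn ξ + I • toCn η)⟫_ℂ‖ := by
          rw [inner_smul_right, hval, norm_mul, Complex.norm_real,
            Real.norm_of_nonneg (by positivity)]
      _ ≤ _ := norm_inner_le_crossNorm (hunit ξ) (hunit η)
          (by rw [real_inner_smul_left, real_inner_smul_right, h, mul_zero, mul_zero]) _

lemma exists_eq_smul_toCn_add_I_smul_orthogonal (ζ : Cn n) :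
    ∃ (u : ℂ) (ξ η : Rn n), ‖u‖ = 1 ∧ ζ = u • (toCn ξ + I • toCn η) ∧ ⟪ξ, η⟫_ℝ = 0 ∧
      ‖ξ‖ ^ 2 - ‖η‖ ^ 2 = ‖bform ζ ζ‖ := by
  obtain ⟨r, hr, hrζ⟩ := exists_norm_eq_one_sq_mul_eq_norm (bform ζ ζ)
  have hr0 : r ≠ 0 := norm_ne_zero_iff.mp (hr ▸ one_ne_zero)
  obtain ⟨ξ, η, hw⟩ := exists_eq_toCn_add_I_smul (r • ζ)
  have hb := bform_toCn_add_I_smul ξ η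
  rw [← hw, bform_smul_self, hrζ] at hb
  simp only [Complex.ext_iff, Complex.add_re, Complex.add_im, Complex.ofReal_re,
    Complex.ofReal_im, Complex.re_ofReal_mul, Complex.im_ofReal_mul, Complex.I_re,
    Complex.I_im] at hb
  refine ⟨r⁻¹, ξ, η, by simp [hr], by rw [← hw, inv_smul_smul₀ hr0], by linarith, by linarith⟩

lemma crossNorm_le_sqrt_two_mul_norm (ζ : Cn n) :
    crossNorm (fun x => ‖x‖) ζ ≤ √2 * ‖ζ‖ := by
  obtain ⟨u, ξ, η, hu, rfl, h, -⟩ := exists_eq_smul_toCn_add_I_smul_orthogonal ζ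
  rw [crossNorm_smul_toCn_add_I_smul u h, norm_smul, hu, one_mul, one_mul]
  exact add_le_sqrt_two_mul (norm_nonneg _) (norm_nonneg _) (norm_nonneg _)
    (norm_toCn_add_I_smul_sq ξ η)

lemma norm_eq_crossNorm_iff (ζ : Cn n) :
    ‖ζ‖ = crossNorm (fun x => ‖x‖) ζ ↔ ∃ (z : ℂ) (x : Rn n), ζ = z • toCn x := by
  constructor
  · obtain ⟨u, ξ, η, hu, rfl, h, -⟩ := exists_eq_smul_toCn_add_I_smul_orthogonal ζ
    rw [crossNorm_smul_toCn_add_I_smul u h, norm_smul, hu, one_mul, one_mul,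
      eq_add_iff_mul_eq_zero (norm_nonneg _) (norm_nonneg _) (norm_nonneg _)
        (norm_toCn_add_I_smul_sq ξ η), mul_eq_zero, norm_eq_zero, norm_eq_zero]
    rintro (rfl | rfl)
    · exact ⟨u * I, η, by simp [smul_smul]⟩
    · exact ⟨u, ξ, by simp⟩
  · rintro ⟨z, x, rfl⟩
    refine le_antisymm (norm_le_crossNorm _) ?_
    rw [norm_smul, norm_toCn]
    exact crossNorm_smul_toCn_le (fun _ => norm_nonneg _) z x

lemma crossNorm_eq_sqrt_two_mul_norm_iff (ζ : Cn n) :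
    crossNorm (fun x => ‖x‖) ζ = √2 * ‖ζ‖ ↔ bform ζ ζ = 0 := by
  obtain ⟨u, ξ, η, hu, hζ, h, hdiff⟩ := exists_eq_smul_toCn_add_I_smul_orthogonal ζ
  rw [← norm_eq_zero, ← hdiff, sub_eq_zero, sq_eq_sq₀ (norm_nonneg _) (norm_nonneg _), hζ,
    crossNorm_smul_toCn_add_I_smul u h, norm_smul, hu, one_mul, one_mul]
  exact add_eq_sqrt_two_mul_iff (norm_nonneg _) (norm_nonneg _) (norm_nonneg _)
    (norm_toCn_add_I_smul_sq ξ η)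

end CrossNorm

/-- Theorem 2.6, consequences: `|ζ| ≤ |ζ|_c ≤ √2 |ζ|` with the equality cases. -/
theorem crossNorm_comparison {n : ℕ} :
    (∀ ζ : Cn n, ‖ζ‖ ≤ crossNorm (fun x => ‖x‖) ζ) ∧
    (∀ ζ : Cn n, crossNorm (fun x => ‖x‖) ζ ≤ Real.sqrt 2 * ‖ζ‖) ∧
    (∀ ζ : Cn n, ‖ζ‖ = crossNorm (fun x => ‖x‖) ζ ↔
      ∃ (z : ℂ) (x : Rn n), ζ = z • toCn x) ∧
    (∀ ζ : Cn n, crossNorm (fun x => ‖x‖) ζ = Real.sqrt 2 * ‖ζ‖ ↔ bform ζ ζ = 0) :=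
  ⟨norm_le_crossNorm, crossNorm_le_sqrt_two_mul_norm, norm_eq_crossNorm_iff,
    crossNorm_eq_sqrt_two_mul_norm_iff⟩

end
end
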